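/- Poincaré inequality via measure-capacity: fix b ∈ S and a probability measure ν. If ν[A] ≤ C_var · cap(A,{b}) for all A ⊂ S\{b}, then Var_ν[f] ≤ 4 C_var · E(f) for all f ∈ ℓ²(μ). Conversely, if Var_ν[f] ≤ C_PI · E(f) for all f, then ν(b) · ν[A] ≤ C_PI · cap(A,{b}) for all A ⊂ S\{b}. -/

import Mathlib

/-!
Forward direction: the `ν`-second moment of `f` about `f b` dominates the variance, and `E` does
not see the shift, so it suffices to bound `∑ ν h²` for `h` vanishing at `b`. By the layer-cake
formula `∑ ν h² = ∫₀^∞ ν[h² > s] ds`; the level set `{h² > s}` avoids `b` and is tested against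
`min 1 (h² / s)`, and integrating these energies edge by edge reduces everything to the
one-dimensional bound `∫₀^∞ (min 1 (u² / s) - min 1 (v² / s))² ds ≤ 4 (u - v)²`.

Converse: a test function `g` of `cap(A, {b})` with mean `m` has
`Var_ν g ≥ ν[A] (1 - m)² + ν(b) m² ≥ ν(b) ν[A]`. The one delicate case is `C_PI = ∞` with vanishing
capacity (`∞ · 0 = 0`): then no point of `A` can be reached from `b` along edges of positive
conductance, so the indicator of the unreachable points is a test function of zero energy.
-/

open scoped ENNReal

/-- The Dirichlet form `E(f) = (1/2) ∑_{x,y} μ(x) p(x,y) (f(x) − f(y))²`. -/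
noncomputable def dirichletForm {S : Type*} (μ : S → ℝ) (p : S → S → ℝ) (f : S → ℝ) : ℝ≥0∞ :=
  (1/2 : ℝ≥0∞) * ∑' q : S × S, ENNReal.ofReal (μ q.1 * p q.1 q.2 * (f q.1 - f q.2) ^ 2)

/-- The capacity `cap(A,B) = inf{E(f) : f|_A = 1, f|_B = 0, 0 ≤ f ≤ 1}`. -/
noncomputable def capacity {S : Type*} (μ : S → ℝ) (p : S → S → ℝ) (A B : Set S) : ℝ≥0∞ :=
  ⨅ f : {f : S → ℝ // (∀ x ∈ A, f x = 1) ∧ (∀ x ∈ B, f x = 0) ∧ ∀ x, 0 ≤ f x ∧ f x ≤ 1},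
    dirichletForm μ p f.1

/-- The measure of a set `A`, `ν[A] = ∑_{x ∈ A} ν(x)`, as a value in `[0,∞]`. -/
noncomputable def measOf {S : Type*} (ν : S → ℝ) (A : Set S) : ℝ≥0∞ :=
  ∑' x : A, ENNReal.ofReal (ν x)

/-- Mean of `f` with respect to `ν`. -/
noncomputable def rMean {S : Type*} (ν : S → ℝ) (f : S → ℝ) : ℝ := ∑' x, ν x * f x

/-- Variance of `f` with respect to `ν`. -/
noncomputable def rVar {S : Type*} (ν : S → ℝ) (f : S → ℝ) : ℝ :=
  ∑' x, ν x * (f x - rMean ν f) ^ 2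

open Real Set MeasureTheory

lemma Real.two_mul_sub_div_add_le_log_div {a b : ℝ} (ha : 0 < a) (hab : a ≤ b) :
    2 * (b - a) / (a + b) ≤ log (b / a) := by
  rcases hab.eq_or_lt with rfl | hab
  · simp [ha.ne']
  have hba : 0 < b - a := sub_pos.2 hab
  -- first term of `log (1 + t⁻¹) = ∑ 2 / (2k+1) · (2t+1)^{-(2k+1)}` at `t = a / (b - a)`
  have hfirst := le_hasSum (hasSum_log_one_add_inv (div_pos ha hba)) 0 fun k _ => by positivity
  have hlhs : 2 * (b - a) / (a + b) = 2 * (1 / (2 * ((0 : ℕ) : ℝ) + 1)) *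
      (1 / (2 * (a / (b - a)) + 1)) ^ (2 * 0 + 1) := by
    field_simp
    ring
  have hrhs : b / a = 1 + (a / (b - a))⁻¹ := by
    field_simp
    ring
  rwa [hlhs, hrhs]

lemma lintegral_Ioi_ofReal_div_sq {a : ℝ} (ha : 0 < a) {c : ℝ} (hc : 0 ≤ c) :
    ∫⁻ s in Ioi a, ENNReal.ofReal (c / s ^ 2) = ENNReal.ofReal (c / a) := by
  have hderiv : ∀ s ∈ Ioi a, HasDerivAt (fun s => -(c / s)) (c / s ^ 2) s := fun s hs =>
    (((hasDerivAt_inv (ha.trans hs).ne').const_mul c).fun_neg).congr_deriv (by ring)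
  have hcont : ContinuousWithinAt (fun s => -(c / s)) (Ici a) a :=
    (continuousAt_const.div continuousAt_id ha.ne').neg.continuousWithinAt
  have hlim : Filter.Tendsto (fun s : ℝ => -(c / s)) Filter.atTop (nhds 0) := by
    simpa using ((tendsto_const_nhds (x := c)).div_atTop (Filter.tendsto_id (α := ℝ))).neg
  have hnn : ∀ s ∈ Ioi a, 0 ≤ c / s ^ 2 := fun s _ => by positivity
  rw [← ofReal_integral_eq_lintegral_ofReal
      (integrableOn_Ioi_deriv_of_nonneg hcont hderiv hnn hlim)
      ((ae_restrict_iff' measurableSet_Ioi).2 (Filter.Eventually.of_forall hnn)),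
    integral_Ioi_of_hasDerivAt_of_nonneg hcont hderiv hnn hlim]
  simp

lemma lintegral_Ioc_ofReal_one_sub_div_sq {a b : ℝ} (ha : 0 ≤ a) (hab : a ≤ b) :
    ∫⁻ s in Ioc a b, ENNReal.ofReal ((1 - a / s) ^ 2) =
      ENNReal.ofReal (b - a ^ 2 / b - 2 * a * log (b / a)) := by
  rcases ha.eq_or_lt with rfl | ha
  · simp
  set F : ℝ → ℝ := fun s => s - 2 * a * log s - a ^ 2 / s
  have hpos : ∀ s ∈ Icc a b, 0 < s := fun s hs => ha.trans_le hs.1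
  have hcont : ContinuousOn F (Icc a b) := fun s hs =>
    ((continuousAt_id.sub (continuousAt_const.mul (continuousAt_log (hpos s hs).ne'))).sub
      (continuousAt_const.div continuousAt_id (hpos s hs).ne')).continuousWithinAt
  have hderiv : ∀ s ∈ Ioo a b, HasDerivAt F ((1 - a / s) ^ 2) s := fun s hs => by
    have hs : s ≠ 0 := (hpos s (Ioo_subset_Icc_self hs)).ne'
    refine (((hasDerivAt_id' s).fun_sub ((hasDerivAt_log hs).const_mul (2 * a))).fun_sub
      ((hasDerivAt_inv hs).const_mul (a ^ 2))).congr_deriv ?_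
    field_simp
    ring
  have hint : IntegrableOn (fun s => (1 - a / s) ^ 2) (Ioc a b) := by
    refine (ContinuousOn.integrableOn_Icc fun s hs => ?_).mono_set Ioc_subset_Icc_self
    exact ((continuousAt_const.sub (continuousAt_const.div continuousAt_id
      (hpos s hs).ne')).pow 2).continuousWithinAt
  rw [← ofReal_integral_eq_lintegral_ofReal hint
      (Filter.Eventually.of_forall fun _ => sq_nonneg _), ← intervalIntegral.integral_of_le hab,
    intervalIntegral.integral_eq_sub_of_hasDerivAt_of_le hab hcont hderiv
      ((intervalIntegrable_iff_integrableOn_Ioc_of_le hab).2 hint)]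
  congr 1
  have hb := (hpos b ⟨hab, le_rfl⟩).ne'
  simp only [F, log_div hb ha.ne']
  field_simp
  ring

lemma lintegral_Ioc_ofReal_one_sub_div_sq_le {a b : ℝ} (ha : 0 ≤ a) (hab : a ≤ b) :
    ∫⁻ s in Ioc a b, ENNReal.ofReal ((1 - a / s) ^ 2) ≤
      ENNReal.ofReal ((b - a) ^ 3 / (b * (a + b))) := by
  rw [lintegral_Ioc_ofReal_one_sub_div_sq ha hab]
  refine ENNReal.ofReal_le_ofReal ?_
  rcases ha.eq_or_lt with rfl | ha
  · rcases hab.eq_or_lt with rfl | hb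
    · simp
    · field_simp
      exact le_of_eq (by ring)
  have hb : 0 < b := ha.trans_le hab
  calc b - a ^ 2 / b - 2 * a * log (b / a)
      ≤ b - a ^ 2 / b - 2 * a * (2 * (b - a) / (a + b)) := by
        gcongr
        exact Real.two_mul_sub_div_add_le_log_div ha hab
    _ = (b - a) ^ 3 / (b * (a + b)) := by
        field_simp
        ring

lemma lintegral_Ioi_ofReal_sq_min_one_div_sub_le {a b : ℝ} (ha : 0 ≤ a) (hab : a ≤ b) :
    ∫⁻ s in Ioi 0, ENNReal.ofReal ((min 1 (b / s) - min 1 (a / s)) ^ 2) ≤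
      ENNReal.ofReal (2 * (b - a) ^ 2 / (a + b)) := by
  rcases (ha.trans hab).eq_or_lt with rfl | hb
  · obtain rfl : a = 0 := le_antisymm hab ha
    simp
  have hbottom : ∫⁻ s in Ioc 0 a, ENNReal.ofReal ((min 1 (b / s) - min 1 (a / s)) ^ 2) = 0 :=
    (setLIntegral_congr_fun measurableSet_Ioc fun s hs => by
      rw [min_eq_left ((one_le_div hs.1).2 (hs.2.trans hab)),
        min_eq_left ((one_le_div hs.1).2 hs.2), sub_self, zero_pow two_ne_zero,
        ENNReal.ofReal_zero]).trans lintegral_zero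
  have hmiddle : ∫⁻ s in Ioc a b, ENNReal.ofReal ((min 1 (b / s) - min 1 (a / s)) ^ 2) ≤
      ENNReal.ofReal ((b - a) ^ 3 / (b * (a + b))) := by
    rw [setLIntegral_congr_fun measurableSet_Ioc fun s hs => by
      have hs0 : 0 < s := ha.trans_lt hs.1
      rw [min_eq_left ((one_le_div hs0).2 hs.2), min_eq_right ((div_le_one hs0).2 hs.1.le)]]
    exact lintegral_Ioc_ofReal_one_sub_div_sq_le ha hab
  have htail : ∫⁻ s in Ioi b, ENNReal.ofReal ((min 1 (b / s) - min 1 (a / s)) ^ 2) =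
      ENNReal.ofReal ((b - a) ^ 2 / b) :=
    (setLIntegral_congr_fun measurableSet_Ioi fun s hs => by
      have hs0 : 0 < s := hb.trans hs
      rw [min_eq_right ((div_le_one hs0).2 (le_of_lt hs)),
        min_eq_right ((div_le_one hs0).2 (hab.trans (le_of_lt hs))), div_sub_div_same,
        div_pow]).trans (lintegral_Ioi_ofReal_div_sq hb (sq_nonneg _))
  have hba : 0 ≤ b - a := sub_nonneg.2 hab
  rw [← Ioc_union_Ioi_eq_Ioi hb.le, lintegral_union measurableSet_Ioi (Ioc_disjoint_Ioi le_rfl),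
    ← Ioc_union_Ioc_eq_Ioc ha hab,
    lintegral_union measurableSet_Ioc (Ioc_disjoint_Ioc_of_le le_rfl), hbottom, htail, zero_add]
  calc _ ≤ ENNReal.ofReal ((b - a) ^ 3 / (b * (a + b))) + ENNReal.ofReal ((b - a) ^ 2 / b) := by
        gcongr
    _ = ENNReal.ofReal (2 * (b - a) ^ 2 / (a + b)) := by
        rw [← ENNReal.ofReal_add (by positivity) (by positivity)]
        congr 1
        field_simp
        ring

lemma lintegral_Ioi_ofReal_sq_min_one_div_sq_sub_le (u v : ℝ) :
    ∫⁻ s in Ioi 0, ENNReal.ofReal ((min 1 (u ^ 2 / s) - min 1 (v ^ 2 / s)) ^ 2) ≤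
      ENNReal.ofReal (4 * (u - v) ^ 2) := by
  wlog h : v ^ 2 ≤ u ^ 2 generalizing u v
  · simpa only [sub_sq_comm] using this v u (le_of_not_ge h)
  refine (lintegral_Ioi_ofReal_sq_min_one_div_sub_le (sq_nonneg v) h).trans
    (ENNReal.ofReal_le_ofReal ?_)
  rcases (add_nonneg (sq_nonneg v) (sq_nonneg u)).eq_or_lt with h0 | h0
  · rw [← h0, div_zero]
    positivity
  · rw [div_le_iff₀ h0]
    nlinarith [sq_nonneg (u - v), sq_nonneg ((u - v) ^ 2), sq_nonneg ((u - v) * (u + v))]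

section DirichletForm

variable {S : Type*} (μ : S → ℝ) (p : S → S → ℝ)

lemma dirichletForm_sub_const (f : S → ℝ) (c : ℝ) :
    dirichletForm μ p (fun x => f x - c) = dirichletForm μ p f := by
  simp only [dirichletForm, sub_sub_sub_cancel_right]

lemma ofReal_mul_sq_sub_le_two_mul_dirichletForm (f : S → ℝ) (x y : S) :
    ENNReal.ofReal (μ x * p x y * (f x - f y) ^ 2) ≤ 2 * dirichletForm μ p f := by
  rw [dirichletForm, ← mul_assoc, one_div, ENNReal.mul_inv_cancel two_ne_zero ENNReal.ofNat_ne_top,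
    one_mul]
  exact ENNReal.le_tsum (x, y)

lemma dirichletForm_eq_zero_of_forall_pos_imp_eq {f : S → ℝ}
    (hf : ∀ x y, 0 < μ x * p x y → f x = f y) : dirichletForm μ p f = 0 := by
  refine mul_eq_zero_of_right _ (ENNReal.tsum_eq_zero.2 fun q => ENNReal.ofReal_eq_zero.2 ?_)
  rcases le_or_gt (μ q.1 * p q.1 q.2) 0 with h | h
  · exact mul_nonpos_of_nonpos_of_nonneg h (sq_nonneg _)
  · simp [hf q.1 q.2 h]

lemma capacity_le_dirichletForm {A B : Set S} {f : S → ℝ} (hA : ∀ x ∈ A, f x = 1)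
    (hB : ∀ x ∈ B, f x = 0) (hf : ∀ x, 0 ≤ f x ∧ f x ≤ 1) :
    capacity μ p A B ≤ dirichletForm μ p f :=
  iInf_le_of_le ⟨f, hA, hB, hf⟩ le_rfl

end DirichletForm

lemma hasSum_mul_sub_sq {S : Type*} {ν f : S → ℝ} (hνs : Summable ν) (hν1 : ∑' x, ν x = 1)
    (hνf : Summable fun x => ν x * f x) (hνf2 : Summable fun x => ν x * f x ^ 2) (c : ℝ) :
    HasSum (fun x => ν x * (f x - c) ^ 2) (∑' x, ν x * f x ^ 2 - 2 * c * rMean ν f + c ^ 2) := by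
  have h := (hνf2.hasSum.sub (hνf.hasSum.mul_left (2 * c))).add (hνs.hasSum.mul_left (c ^ 2))
  rw [hν1, mul_one] at h
  exact h.congr_fun fun x => by ring

lemma rVar_add_sq_eq_tsum_mul_sub_sq {S : Type*} {ν f : S → ℝ} (hνs : Summable ν)
    (hν1 : ∑' x, ν x = 1) (hνf : Summable fun x => ν x * f x)
    (hνf2 : Summable fun x => ν x * f x ^ 2) (c : ℝ) :
    rVar ν f + (rMean ν f - c) ^ 2 = ∑' x, ν x * (f x - c) ^ 2 := by
  rw [rVar, (hasSum_mul_sub_sq hνs hν1 hνf hνf2 _).tsum_eq,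
    (hasSum_mul_sub_sq hνs hν1 hνf hνf2 c).tsum_eq]
  ring

section Forward

variable {S : Type*} (μ : S → ℝ) (p : S → S → ℝ)

lemma tsum_ofReal_mul_eq_lintegral_measOf [Countable S] {ν : S → ℝ} (hν : ∀ x, 0 ≤ ν x)
    (g : S → ℝ) :
    ∑' x, ENNReal.ofReal (ν x * g x) = ∫⁻ s in Ioi 0, measOf ν {x | s < g x} := by
  have hlevel : ∀ s, measOf ν {x | s < g x} =
      ∑' x, (Iio (g x)).indicator (fun _ => ENNReal.ofReal (ν x)) s := fun s =>
    tsum_subtype {x | s < g x} fun x => ENNReal.ofReal (ν x)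
  simp_rw [hlevel]
  rw [lintegral_tsum fun x => (measurable_const.indicator measurableSet_Iio).aemeasurable]
  refine tsum_congr fun x => ?_
  rw [lintegral_indicator_const measurableSet_Iio, Measure.restrict_apply measurableSet_Iio,
    Iio_inter_Ioi, Real.volume_Ioo, sub_zero, ENNReal.ofReal_mul (hν x), mul_comm]

lemma measOf_lt_sq_le_mul_dirichletForm {ν : S → ℝ} {B : Set S} {C : ℝ≥0∞}
    (hcap : ∀ A ⊆ Bᶜ, measOf ν A ≤ C * capacity μ p A B) {h : S → ℝ} (hB : ∀ x ∈ B, h x = 0)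
    {s : ℝ} (hs : 0 < s) :
    measOf ν {x | s < h x ^ 2} ≤ C * dirichletForm μ p (fun x => min 1 (h x ^ 2 / s)) := by
  have hlevel : {x | s < h x ^ 2} ⊆ Bᶜ := fun x hx hxB => by
    simp [hB x hxB, hs.not_gt] at hx
  refine (hcap _ hlevel).trans (mul_le_mul_right (capacity_le_dirichletForm μ p ?_ ?_ ?_) C)
  · exact fun x hx => min_eq_left ((one_le_div hs).2 (le_of_lt hx))
  · intro x hx
    simp [hB x hx]
  · exact fun x => ⟨le_min zero_le_one (by positivity), min_le_left _ _⟩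

lemma lintegral_dirichletForm_min_one_div_le [Countable S] (hμ : ∀ x, 0 ≤ μ x)
    (hp : ∀ x y, 0 ≤ p x y) (h : S → ℝ) :
    ∫⁻ s in Ioi 0, dirichletForm μ p (fun x => min 1 (h x ^ 2 / s)) ≤
      4 * dirichletForm μ p h := by
  have hedge : ∀ x y, ∫⁻ s in Ioi 0, ENNReal.ofReal
        (μ x * p x y * (min 1 (h x ^ 2 / s) - min 1 (h y ^ 2 / s)) ^ 2) ≤
      4 * ENNReal.ofReal (μ x * p x y * (h x - h y) ^ 2) := fun x y => by
    have hc : 0 ≤ μ x * p x y := mul_nonneg (hμ x) (hp x y)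
    simp_rw [ENNReal.ofReal_mul hc]
    rw [lintegral_const_mul' _ _ ENNReal.ofReal_ne_top, mul_left_comm, ← ENNReal.ofReal_ofNat 4,
      ← ENNReal.ofReal_mul zero_le_four]
    gcongr
    exact lintegral_Ioi_ofReal_sq_min_one_div_sq_sub_le (h x) (h y)
  simp only [dirichletForm]
  rw [lintegral_const_mul' _ _ (by simp), lintegral_tsum fun q => by fun_prop, mul_left_comm,
    ← ENNReal.tsum_mul_left (a := 4)]
  gcongr with q
  exact hedge q.1 q.2

lemma tsum_ofReal_mul_sq_le_of_measOf_le_mul_capacity [Countable S] (hμ : ∀ x, 0 ≤ μ x)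
    (hp : ∀ x y, 0 ≤ p x y) {ν : S → ℝ} (hν : ∀ x, 0 ≤ ν x) {B : Set S} {C : ℝ≥0∞}
    (hcap : ∀ A ⊆ Bᶜ, measOf ν A ≤ C * capacity μ p A B) {h : S → ℝ} (hB : ∀ x ∈ B, h x = 0) :
    ∑' x, ENNReal.ofReal (ν x * h x ^ 2) ≤ 4 * C * dirichletForm μ p h :=
  calc ∑' x, ENNReal.ofReal (ν x * h x ^ 2)
      = ∫⁻ s in Ioi 0, measOf ν {x | s < h x ^ 2} := tsum_ofReal_mul_eq_lintegral_measOf hν _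
    _ ≤ ∫⁻ s in Ioi 0, C * dirichletForm μ p (fun x => min 1 (h x ^ 2 / s)) :=
        setLIntegral_mono' measurableSet_Ioi fun s hs =>
          measOf_lt_sq_le_mul_dirichletForm μ p hcap hB hs
    _ = C * ∫⁻ s in Ioi 0, dirichletForm μ p (fun x => min 1 (h x ^ 2 / s)) :=
        lintegral_const_mul _ (Measurable.const_mul (Measurable.tsum fun q => by fun_prop) _)
    _ ≤ C * (4 * dirichletForm μ p h) := by
        gcongr
        exact lintegral_dirichletForm_min_one_div_le μ p hμ hp h
    _ = 4 * C * dirichletForm μ p h := by ring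

theorem ofReal_rVar_le_of_measOf_le_mul_capacity [Countable S] (hμ : ∀ x, 0 ≤ μ x)
    (hp : ∀ x y, 0 ≤ p x y) {ν : S → ℝ} (hν : ∀ x, 0 ≤ ν x) (hνs : Summable ν)
    (hν1 : ∑' x, ν x = 1) {b : S} {C : ℝ≥0∞}
    (hcap : ∀ A ⊆ {b}ᶜ, measOf ν A ≤ C * capacity μ p A {b}) {f : S → ℝ}
    (hνf : Summable fun x => ν x * f x) (hνf2 : Summable fun x => ν x * f x ^ 2) :
    ENNReal.ofReal (rVar ν f) ≤ 4 * C * dirichletForm μ p f :=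
  calc ENNReal.ofReal (rVar ν f)
      ≤ ENNReal.ofReal (∑' x, ν x * (f x - f b) ^ 2) := by
        rw [← rVar_add_sq_eq_tsum_mul_sub_sq hνs hν1 hνf hνf2]
        exact ENNReal.ofReal_le_ofReal (le_add_of_nonneg_right (sq_nonneg _))
    _ = ∑' x, ENNReal.ofReal (ν x * (f x - f b) ^ 2) :=
        ENNReal.ofReal_tsum_of_nonneg (fun x => mul_nonneg (hν x) (sq_nonneg _))
          (hasSum_mul_sub_sq hνs hν1 hνf hνf2 _).summable
    _ ≤ 4 * C * dirichletForm μ p (fun x => f x - f b) :=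
        tsum_ofReal_mul_sq_le_of_measOf_le_mul_capacity μ p hμ hp hν hcap fun x hx => by
          rw [mem_singleton_iff.1 hx, sub_self]
    _ = 4 * C * dirichletForm μ p f := by rw [dirichletForm_sub_const]

end Forward

section Converse

variable {S : Type*} (μ : S → ℝ) (p : S → S → ℝ)

lemma exists_pos_ofReal_mul_sq_le_dirichletForm {b y : S}
    (hy : Relation.ReflTransGen (fun x y => 0 < μ x * p x y) b y) :
    ∃ ε > 0, ∀ f : S → ℝ, f b = 0 → ENNReal.ofReal (ε * f y ^ 2) ≤ dirichletForm μ p f := by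
  induction hy with
  | refl => exact ⟨1, one_pos, fun f hf => by simp [hf]⟩
  | @tail y z _ hyz ih =>
    obtain ⟨ε, hε, hbound⟩ := ih
    set c := μ y * p y z
    -- `f z ^ 2 ≤ 2 f y ^ 2 + 2 (f y - f z) ^ 2` and each term is controlled by `E(f)`
    refine ⟨min ε c / 8, by positivity, fun f hf => ?_⟩
    have hreal : 4 * (min ε c / 8 * f z ^ 2) ≤ 2 * (ε * f y ^ 2) + c * (f y - f z) ^ 2 := by
      have hm : 0 ≤ min ε c := le_min hε.le hyz.le
      nlinarith [mul_le_mul_of_nonneg_right (min_le_left ε c) (sq_nonneg (f y)),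
        mul_le_mul_of_nonneg_right (min_le_right ε c) (sq_nonneg (f y - f z)),
        mul_nonneg hm (sq_nonneg (2 * f y - f z)), mul_nonneg hε.le (sq_nonneg (f y))]
    have h4 : (4 : ℝ≥0∞) * ENNReal.ofReal (min ε c / 8 * f z ^ 2) ≤ 4 * dirichletForm μ p f :=
      calc (4 : ℝ≥0∞) * ENNReal.ofReal (min ε c / 8 * f z ^ 2)
          ≤ ENNReal.ofReal (2 * (ε * f y ^ 2) + c * (f y - f z) ^ 2) := by
            rw [← ENNReal.ofReal_ofNat 4, ← ENNReal.ofReal_mul zero_le_four]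
            exact ENNReal.ofReal_le_ofReal hreal
        _ ≤ 2 * ENNReal.ofReal (ε * f y ^ 2) + ENNReal.ofReal (c * (f y - f z) ^ 2) := by
            rw [← ENNReal.ofReal_ofNat 2, ← ENNReal.ofReal_mul zero_le_two]
            exact ENNReal.ofReal_add_le
        _ ≤ 2 * dirichletForm μ p f + 2 * dirichletForm μ p f := by
            gcongr
            · exact hbound f hf
            · exact ofReal_mul_sq_sub_le_two_mul_dirichletForm μ p f y z
        _ = 4 * dirichletForm μ p f := by rw [← add_mul]; norm_num
    exact (ENNReal.mul_le_mul_iff_right four_ne_zero ENNReal.ofNat_ne_top).1 h4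

lemma exists_dirichletForm_eq_zero_of_capacity_eq_zero
    (hdb : ∀ x y, μ x * p x y = μ y * p y x) {A B : Set S} (hcap : capacity μ p A B = 0) :
    ∃ f : S → ℝ, ((∀ x ∈ A, f x = 1) ∧ (∀ x ∈ B, f x = 0) ∧ ∀ x, 0 ≤ f x ∧ f x ≤ 1) ∧
      dirichletForm μ p f = 0 := by
  classical
  set R := {x | ∃ b ∈ B, Relation.ReflTransGen (fun x y => 0 < μ x * p x y) b x}
  have hAR : ∀ x ∈ A, x ∉ R := by
    rintro x hx ⟨b, hb, hbx⟩
    obtain ⟨ε, hε, hbound⟩ := exists_pos_ofReal_mul_sq_le_dirichletForm μ p hbx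
    have : ENNReal.ofReal ε ≤ capacity μ p A B := le_iInf fun f => by
      simpa [f.2.1 x hx] using hbound f.1 (f.2.2.1 b hb)
    rw [hcap, nonpos_iff_eq_zero, ENNReal.ofReal_eq_zero] at this
    exact this.not_gt hε
  refine ⟨Rᶜ.indicator 1, ⟨fun x hx => ?_, fun x hx => ?_, fun x => ?_⟩, ?_⟩
  · simp [hAR x hx]
  · simpa using ⟨x, hx, Relation.ReflTransGen.refl⟩
  · by_cases hx : x ∈ R <;> simp [hx]
  · refine dirichletForm_eq_zero_of_forall_pos_imp_eq μ p fun x y hxy => ?_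
    have hyx : 0 < μ y * p y x := hdb x y ▸ hxy
    have : x ∈ R ↔ y ∈ R :=
      ⟨fun ⟨b, hb, h⟩ => ⟨b, hb, h.tail hxy⟩, fun ⟨b, hb, h⟩ => ⟨b, hb, h.tail hyx⟩⟩
    simp [Set.indicator, this]

lemma mul_le_mul_one_sub_sq_add_mul_sq {a β : ℝ} (ha : 0 ≤ a) (hβ : 0 ≤ β) (h : a + β ≤ 1)
    (m : ℝ) : a * β ≤ a * (1 - m) ^ 2 + β * m ^ 2 := by
  nlinarith [sq_nonneg ((a + β) * m - a), mul_nonneg (mul_nonneg ha hβ) (sub_nonneg.2 h),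
    mul_nonneg ha (sq_nonneg (1 - m)), mul_nonneg hβ (sq_nonneg m)]

lemma ofReal_mul_measOf_le_rVar {ν : S → ℝ} (hν : ∀ x, 0 ≤ ν x) (hνs : Summable ν)
    (hν1 : ∑' x, ν x = 1) {A : Set S} {b : S} (hbA : b ∉ A) {g : S → ℝ}
    (hgA : ∀ x ∈ A, g x = 1) (hgb : g b = 0) (hνg : Summable fun x => ν x * g x)
    (hνg2 : Summable fun x => ν x * g x ^ 2) :
    ENNReal.ofReal (ν b) * measOf ν A ≤ ENNReal.ofReal (rVar ν g) := by
  have hsplit : ∀ F : S → ℝ, Summable F → ∑' x : ↥(A ∪ {b}), F x = ∑' x : A, F x + F b :=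
    fun F hF => by
      rw [Summable.tsum_union_disjoint (disjoint_singleton_right.2 hbA) (hF.subtype _)
        (hF.subtype _), tsum_singleton b F]
  set a := ∑' x : A, ν x
  set m := rMean ν g
  have hT := hasSum_mul_sub_sq hνs hν1 hνg hνg2 m
  have hmass : a + ν b ≤ 1 := by
    rw [← hsplit ν hνs, ← hν1]
    exact Summable.tsum_subtype_le ν _ hν hνs
  have hvar : a * (1 - m) ^ 2 + ν b * m ^ 2 ≤ rVar ν g := by
    have hA : ∑' x : A, ν x * (g x - m) ^ 2 = a * (1 - m) ^ 2 := by
      rw [tsum_congr fun x : A => by rw [hgA x x.2], tsum_mul_right]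
    have := Summable.tsum_subtype_le _ (A ∪ {b}) (fun x => mul_nonneg (hν x) (sq_nonneg _))
      hT.summable
    rwa [hsplit _ hT.summable, hA, hgb, zero_sub, neg_sq] at this
  rw [measOf, ← ENNReal.ofReal_tsum_of_nonneg (f := fun x : A => ν x) (fun x => hν x)
      (hνs.subtype A),
    ← ENNReal.ofReal_mul (hν b)]
  rw [mul_comm]
  exact ENNReal.ofReal_le_ofReal
    ((mul_le_mul_one_sub_sq_add_mul_sq (tsum_nonneg fun x : A => hν x) (hν b) hmass m).trans hvar)

lemma summable_mul_of_abs_le_one {w g : S → ℝ} (hw : ∀ x, 0 ≤ w x) (hws : Summable w)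
    (hg : ∀ x, |g x| ≤ 1) : Summable fun x => w x * g x :=
  hws.of_norm_bounded fun x => by
    rw [norm_mul, Real.norm_of_nonneg (hw x)]
    exact mul_le_of_le_one_right (hw x) (hg x)

lemma le_mul_capacity_of_forall_le_mul_dirichletForm (hdb : ∀ x y, μ x * p x y = μ y * p y x)
    {A B : Set S} (hAB : Disjoint A B) {X C : ℝ≥0∞}
    (h : ∀ f : S → ℝ, (∀ x ∈ A, f x = 1) → (∀ x ∈ B, f x = 0) → (∀ x, 0 ≤ f x ∧ f x ≤ 1) →
      X ≤ C * dirichletForm μ p f) :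
    X ≤ C * capacity μ p A B := by
  classical
  rw [capacity, ENNReal.mul_iInf']
  · exact le_iInf fun f => h f.1 f.2.1 f.2.2.1 f.2.2.2
  · intro _ hcap
    obtain ⟨f, hf, hf0⟩ := exists_dirichletForm_eq_zero_of_capacity_eq_zero μ p hdb hcap
    exact ⟨⟨f, hf⟩, hf0⟩
  · intro _
    refine ⟨⟨Bᶜ.indicator 1, fun x hx => ?_, fun x hx => ?_, fun x => ?_⟩⟩
    · simp [hAB.notMem_of_mem_left hx]
    · simp [hx]
    · by_cases hx : x ∈ B <;> simp [hx]

theorem ofReal_mul_measOf_le_mul_capacity_of_poincare (hμ : ∀ x, 0 ≤ μ x)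
    (hμ1 : ∑' x, μ x = 1) (hdb : ∀ x y, μ x * p x y = μ y * p y x) {ν : S → ℝ}
    (hν : ∀ x, 0 ≤ ν x) (hνs : Summable ν) (hν1 : ∑' x, ν x = 1) {b : S} {C : ℝ≥0∞}
    (hPI : ∀ f : S → ℝ, Summable (fun x => μ x * f x ^ 2) →
      Summable (fun x => ν x * f x) → Summable (fun x => ν x * f x ^ 2) →
      ENNReal.ofReal (rVar ν f) ≤ C * dirichletForm μ p f)
    {A : Set S} (hA : A ⊆ {b}ᶜ) :
    ENNReal.ofReal (ν b) * measOf ν A ≤ C * capacity μ p A {b} := by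
  have hμs : Summable μ := by
    by_contra h
    simp [tsum_eq_zero_of_not_summable h] at hμ1
  have hbA : b ∉ A := fun h => hA h rfl
  refine le_mul_capacity_of_forall_le_mul_dirichletForm μ p hdb
    (disjoint_singleton_right.2 hbA) fun g hgA hgb hg => ?_
  have hg1 : ∀ x, |g x| ≤ 1 := fun x => abs_le.2 ⟨by linarith [(hg x).1], (hg x).2⟩
  have hg2 : ∀ x, |g x ^ 2| ≤ 1 := fun x => by
    rw [abs_pow]
    exact pow_le_one₀ (abs_nonneg _) (hg1 x)
  have hνg := summable_mul_of_abs_le_one hν hνs hg1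
  have hνg2 := summable_mul_of_abs_le_one hν hνs hg2
  exact (ofReal_mul_measOf_le_rVar hν hνs hν1 hbA hgA (hgb b rfl) hνg hνg2).trans
    (hPI g (summable_mul_of_abs_le_one hμ hμs hg2) hνg hνg2)

end Converse

/-- Poincaré inequality via measure-capacity comparison: the measure-capacity
inequality `ν[A] ≤ C_var cap(A,{b})` implies `Var_ν[f] ≤ 4 C_var E(f)`; conversely,
a Poincaré inequality with constant `C_PI` yields `ν(b) ν[A] ≤ C_PI cap(A,{b})`. -/
theorem poincare_via_measure_capacity {S : Type*} [Countable S]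
    (μ : S → ℝ) (p : S → S → ℝ)
    (hμ : ∀ x, 0 ≤ μ x) (hμ1 : ∑' x, μ x = 1)
    (hp : ∀ x y, 0 ≤ p x y)
    (hdb : ∀ x y, μ x * p x y = μ y * p y x)
    (ν : S → ℝ) (hν : ∀ x, 0 ≤ ν x) (hνs : Summable ν) (hν1 : ∑' x, ν x = 1)
    (b : S) (Cvar CPI : ℝ≥0∞) :
    ((∀ A : Set S, A ⊆ {b}ᶜ → measOf ν A ≤ Cvar * capacity μ p A {b}) →
      ∀ f : S → ℝ, Summable (fun x => μ x * f x ^ 2) →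
        Summable (fun x => ν x * f x) → Summable (fun x => ν x * f x ^ 2) →
        ENNReal.ofReal (rVar ν f) ≤ 4 * Cvar * dirichletForm μ p f)
    ∧
    ((∀ f : S → ℝ, Summable (fun x => μ x * f x ^ 2) →
        Summable (fun x => ν x * f x) → Summable (fun x => ν x * f x ^ 2) →
        ENNReal.ofReal (rVar ν f) ≤ CPI * dirichletForm μ p f) →
      ∀ A : Set S, A ⊆ {b}ᶜ →
        ENNReal.ofReal (ν b) * measOf ν A ≤ CPI * capacity μ p A {b}) :=
  ⟨fun hcap _ _ hνf hνf2 =>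
      ofReal_rVar_le_of_measOf_le_mul_capacity μ p hμ hp hν hνs hν1 hcap hνf hνf2,
    fun hPI _ hA => ofReal_mul_measOf_le_mul_capacity_of_poincare μ p hμ hμ1 hdb hν hνs hν1 hPI hA⟩
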